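/- arXiv:0910.4959 — 3 statements merged into one kernel-verified Lean document; each statement's English description precedes it below -/
import Mathlib

section
/- Let (Ω, F, (F_t)_{t≥0}, P) be a filtered probability space satisfying the N-usual conditions, and let (X_t)_{t≥0} be a real-valued adapted process on this space. Assume there exists a càdlàg process (Y_t)_{t≥0} which is a modification of (X_t)_{t≥0}. Then there exists a càdlàg and adapted modification of (X_t)_{t≥0}, and any such modification is indistinguishable from (Y_t)_{t≥0}. -/
open MeasureTheory Set Filter
open scoped NNReal ENNReal

variable {Ω : Type*}

/-- A set `A` is N-negligible with respect to the filtered probability space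
`(Ω, mΩ, 𝓕, P)` if it is covered by countably many sets `B n` with `B n ∈ 𝓕 n`
and `P (B n) = 0`. -/
def NNegligible {mΩ : MeasurableSpace Ω} (𝓕 : Filtration ℝ≥0 mΩ) (P : Measure Ω)
    (A : Set Ω) : Prop :=
  ∃ B : ℕ → Set Ω, (∀ n : ℕ, MeasurableSet[𝓕 (n : ℝ≥0)] (B n)) ∧
    (∀ n : ℕ, P (B n) = 0) ∧ A ⊆ ⋃ n, B n

/-- The filtered probability space satisfies the N-usual conditions: it is N-complete
(every N-negligible set belongs to `𝓕 0`) and the filtration is right-continuous. -/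
def NUsual {mΩ : MeasurableSpace Ω} (𝓕 : Filtration ℝ≥0 mΩ) (P : Measure Ω) : Prop :=
  (∀ A : Set Ω, NNegligible 𝓕 P A → MeasurableSet[𝓕 0] A) ∧
  ∀ t : ℝ≥0, (𝓕 t : MeasurableSpace Ω) = ⨅ u ∈ Set.Ioi t, 𝓕 u

/-- A function `f : ℝ≥0 → ℝ` is càdlàg: right-continuous everywhere and with finite left
limits at every positive point. -/
def IsCadlag (f : ℝ≥0 → ℝ) : Prop :=
  (∀ t : ℝ≥0, ContinuousWithinAt f (Set.Ici t) t) ∧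
  ∀ t : ℝ≥0, 0 < t → ∃ l : ℝ, Tendsto f (nhdsWithin t (Set.Iio t)) (nhds l)

/-!
By right-continuity of the filtration, `𝓕 t = ⋂_{u > t} 𝓕 u`, so the right limit of `X` along
a countable dense set `D` of times is adapted wherever it exists. It exists and is càdlàg as soon
as the restriction of the path to `D` satisfies Billingsley's condition `w''(δ) → 0` on every
`[0, n]`. That condition involves countably many values of `X` on `[0, n]`, so its failure set is
in `𝓕 n`, and it is null since the condition holds wherever `X` agrees with the càdlàg `Y` on `D`.
The failure sets are thus N-negligible, their union is in `𝓕 0`, and setting the right limit to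
`0` there gives a càdlàg adapted modification. Two right-continuous modifications agree on `D`
almost surely, hence everywhere.
-/

open Topology Metric

section ThreePoint

variable {D : Set ℝ≥0} {T δ : ℝ≥0} {f g : ℝ≥0 → ℝ} {ε : ℝ}

/-- Billingsley's modulus `w''_f(δ)` on `[0, T]`, sampled at times in `D`, is at most `ε`. -/
def ThreePointBound (D : Set ℝ≥0) (T : ℝ≥0) (f : ℝ≥0 → ℝ) (δ : ℝ≥0) (ε : ℝ) : Prop :=
  ∀ a ∈ D, ∀ b ∈ D, ∀ c ∈ D, a ≤ b → b ≤ c → c ≤ T → c ≤ a + δ →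
    min (dist (f a) (f b)) (dist (f b) (f c)) ≤ ε

/-- `w''_f(δ) → 0` as `δ → 0`, along `ε = 1/(m+1)`, `δ = 1/(j+1)` so that it is a countable
condition on the values of `f` on `D`. -/
def BillingsleyW (D : Set ℝ≥0) (T : ℝ≥0) (f : ℝ≥0 → ℝ) : Prop :=
  ∀ m : ℕ, ∃ j : ℕ, ThreePointBound D T f (j + 1 : ℝ≥0)⁻¹ (m + 1 : ℝ)⁻¹

theorem BillingsleyW.congr (h : BillingsleyW D T f) (hfg : EqOn f g D) :
    BillingsleyW D T g := by
  intro m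
  obtain ⟨j, hj⟩ := h m
  refine ⟨j, fun a ha b hb c hc hab hbc hcT hca => ?_⟩
  simpa only [hfg ha, hfg hb, hfg hc] using hj a ha b hb c hc hab hbc hcT hca

theorem BillingsleyW.exists_threePointBound (h : BillingsleyW D T f) (hε : 0 < ε) :
    ∃ δ : ℝ≥0, 0 < δ ∧ ThreePointBound D T f δ ε := by
  obtain ⟨m, hm⟩ := exists_nat_one_div_lt hε
  obtain ⟨j, hj⟩ := h m
  refine ⟨(j + 1 : ℝ≥0)⁻¹, by positivity, fun a ha b hb c hc hab hbc hcT hca => ?_⟩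
  exact (hj a ha b hb c hc hab hbc hcT hca).trans (by simpa using hm.le)

theorem ThreePointBound.not_two_jumps (h : ThreePointBound D T f δ ε) {x y z a b a' b' : ℝ≥0}
    (ha : a ∈ D ∩ Icc x z) (hb : b ∈ D ∩ Icc x z) (ha' : a' ∈ D ∩ Icc z y)
    (hb' : b' ∈ D ∩ Icc z y) (hyT : y ≤ T) (hyx : y ≤ x + δ)
    (hjump : 3 * ε < dist (f a) (f b)) (hjump' : 3 * ε < dist (f a') (f b')) : False := by
  wlog hab : a ≤ b generalizing a b
  · exact this hb ha (by rwa [dist_comm]) (le_of_not_ge hab)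
  wlog hab' : a' ≤ b' generalizing a' b'
  · exact this hb' ha' (by rwa [dist_comm]) (le_of_not_ge hab')
  have hba' : b ≤ a' := hb.2.2.trans ha'.2.1
  have hspan : ∀ c ∈ Icc z y, c ≤ a + δ := fun c hc =>
    hc.2.trans (hyx.trans (by gcongr; exact ha.2.1))
  have h₁ := h a ha.1 b hb.1 a' ha'.1 hab hba' (ha'.2.2.trans hyT) (hspan a' ha'.2)
  have h₂ := h a ha.1 b hb.1 b' hb'.1 hab (hba'.trans hab') (hb'.2.2.trans hyT) (hspan b' hb'.2)
  have htri := dist_triangle_left (f a') (f b') (f b)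
  have := dist_nonneg (x := f a) (y := f b)
  have := dist_nonneg (x := f b) (y := f a')
  -- `(a, b, a')` violates the bound if `f b` and `f a'` are far apart, `(a, b, b')` otherwise
  rcases min_le_iff.1 h₁ with h₁ | h₁ <;> rcases min_le_iff.1 h₂ with h₂ | h₂ <;> linarith

end ThreePoint

theorem exists_tendsto_of_forall_dist_le {α β : Type*} [PseudoMetricSpace β] [CompleteSpace β]
    {l : Filter α} [l.NeBot] {g : α → β}
    (h : ∀ ε > 0, ∃ s ∈ l, ∀ a ∈ s, ∀ b ∈ s, dist (g a) (g b) ≤ ε) :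
    ∃ c, Tendsto g l (𝓝 c) := by
  refine cauchy_map_iff_exists_tendsto.1 (Metric.cauchy_iff.2 ⟨inferInstance, fun ε hε => ?_⟩)
  obtain ⟨s, hs, hdist⟩ := h (ε / 2) (half_pos hε)
  refine ⟨g '' s, image_mem_map hs, ?_⟩
  rintro _ ⟨a, ha, rfl⟩ _ ⟨b, hb, rfl⟩
  exact (hdist a ha b hb).trans_lt (half_lt_self hε)

section RightLimit

variable {D : Set ℝ≥0} {f g : ℝ≥0 → ℝ} {ε : ℝ}

theorem exists_Ioo_dist_le_right (hf : ∀ n : ℕ, BillingsleyW D n f) (t : ℝ≥0) (hε : 0 < ε) :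
    ∃ u > t, ∀ a ∈ D ∩ Ioo t u, ∀ b ∈ D ∩ Ioo t u, dist (f a) (f b) ≤ ε := by
  obtain ⟨n, hn⟩ := exists_nat_ge (t + 1)
  obtain ⟨δ, hδ, hbound⟩ := (hf n).exists_threePointBound (ε := ε / 3) (by positivity)
  by_contra! H
  obtain ⟨a, ha, b, hb, hab⟩ := H (t + min δ 1) (lt_add_of_pos_right t (lt_min hδ one_pos))
  obtain ⟨a', ha', b', hb', hab'⟩ := H (min a b) (lt_min ha.2.1 hb.2.1)
  exact hbound.not_two_jumps ⟨ha'.1, ha'.2.1.le, ha'.2.2.le⟩ ⟨hb'.1, hb'.2.1.le, hb'.2.2.le⟩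
    ⟨ha.1, min_le_left a b, ha.2.2.le⟩ ⟨hb.1, min_le_right a b, hb.2.2.le⟩
    ((add_le_add le_rfl (min_le_right δ 1)).trans hn) (add_le_add le_rfl (min_le_left δ 1))
    (by linarith) (by linarith)

theorem exists_Ioo_dist_le_left (hf : ∀ n : ℕ, BillingsleyW D n f) {t : ℝ≥0} (ht : 0 < t)
    (hε : 0 < ε) : ∃ u < t, ∀ a ∈ D ∩ Ioo u t, ∀ b ∈ D ∩ Ioo u t, dist (f a) (f b) ≤ ε := by
  obtain ⟨n, hn⟩ := exists_nat_ge t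
  obtain ⟨δ, hδ, hbound⟩ := (hf n).exists_threePointBound (ε := ε / 3) (by positivity)
  by_contra! H
  obtain ⟨a, ha, b, hb, hab⟩ := H (t - δ) (tsub_lt_self ht hδ)
  obtain ⟨a', ha', b', hb', hab'⟩ := H (max a b) (max_lt ha.2.2 hb.2.2)
  exact hbound.not_two_jumps ⟨ha.1, ha.2.1.le, le_max_left a b⟩
    ⟨hb.1, hb.2.1.le, le_max_right a b⟩ ⟨ha'.1, ha'.2.1.le, ha'.2.2.le⟩
    ⟨hb'.1, hb'.2.1.le, hb'.2.2.le⟩ hn le_tsub_add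
    (by linarith) (by linarith)

theorem Dense.nhdsWithin_inter_Ioi_neBot (hD : Dense D) (t : ℝ≥0) :
    (𝓝[D ∩ Ioi t] t).NeBot := by
  refine mem_closure_iff_nhdsWithin_neBot.1 (mem_closure_iff_nhds.2 fun U hU => ?_)
  obtain ⟨u, hu, hsub⟩ := exists_Ico_subset_of_mem_nhds hU (exists_gt t)
  obtain ⟨z, hzD, hz⟩ := hD.exists_between hu
  exact ⟨z, hsub ⟨hz.1.le, hz.2⟩, hzD, hz.1⟩

theorem Ioo_mem_nhdsWithin_inter_Ioi (D : Set ℝ≥0) {t u : ℝ≥0} (htu : t < u) :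
    D ∩ Ioo t u ∈ 𝓝[D ∩ Ioi t] t := by
  rw [← Ioi_inter_Iio, ← inter_assoc]
  exact inter_mem_nhdsWithin _ (Iio_mem_nhds htu)

variable (D) in
noncomputable def rightLimOn (f : ℝ≥0 → ℝ) (t : ℝ≥0) : ℝ :=
  limUnder (𝓝[D ∩ Ioi t] t) f

theorem rightLimOn_congr (h : EqOn f g D) : rightLimOn D f = rightLimOn D g :=
  funext fun _ => congrArg lim (map_congr (eventually_nhdsWithin_of_forall fun _ hs => h hs.1))

theorem rightLimOn_eq_of_continuousWithinAt (hD : Dense D) {t : ℝ≥0}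
    (hf : ContinuousWithinAt f (Ici t) t) : rightLimOn D f t = f t :=
  have := hD.nhdsWithin_inter_Ioi_neBot t
  (hf.tendsto.mono_left (nhdsWithin_mono _ fun _ hs => Ioi_subset_Ici_self hs.2)).limUnder_eq

theorem tendsto_rightLimOn (hD : Dense D) (hf : ∀ n : ℕ, BillingsleyW D n f) (t : ℝ≥0) :
    Tendsto f (𝓝[D ∩ Ioi t] t) (𝓝 (rightLimOn D f t)) := by
  have := hD.nhdsWithin_inter_Ioi_neBot t
  refine tendsto_nhds_limUnder (exists_tendsto_of_forall_dist_le fun ε hε => ?_)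
  obtain ⟨u, htu, hosc⟩ := exists_Ioo_dist_le_right hf t hε
  exact ⟨_, Ioo_mem_nhdsWithin_inter_Ioi D htu, hosc⟩

theorem dist_rightLimOn_le (hD : Dense D) (hf : ∀ n : ℕ, BillingsleyW D n f)
    {x y s : ℝ≥0} (hxs : x ≤ s) (hsy : s < y) {c : ℝ}
    (h : ∀ a ∈ D ∩ Ioo x y, dist (f a) c ≤ ε) : dist (rightLimOn D f s) c ≤ ε :=
  have := hD.nhdsWithin_inter_Ioi_neBot s
  le_of_tendsto ((tendsto_rightLimOn hD hf s).dist tendsto_const_nhds)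
    (mem_of_superset (Ioo_mem_nhdsWithin_inter_Ioi D hsy)
      fun a ha => h a ⟨ha.1, hxs.trans_lt ha.2.1, ha.2.2⟩)

theorem continuousWithinAt_rightLimOn (hD : Dense D) (hf : ∀ n : ℕ, BillingsleyW D n f)
    (t : ℝ≥0) : ContinuousWithinAt (rightLimOn D f) (Ici t) t := by
  refine Metric.tendsto_nhds.2 fun ε hε => ?_
  obtain ⟨u, htu, hosc⟩ := exists_Ioo_dist_le_right hf t (div_pos hε three_pos)
  obtain ⟨q, hqD, hq⟩ := hD.exists_between htu
  have hclose : ∀ s ∈ Ico t u, dist (rightLimOn D f s) (f q) ≤ ε / 3 := fun s hs =>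
    dist_rightLimOn_le hD hf hs.1 hs.2 fun a ha => hosc a ha q ⟨hqD, hq⟩
  filter_upwards [Ico_mem_nhdsGE htu] with s hs
  calc dist (rightLimOn D f s) (rightLimOn D f t)
      ≤ dist (rightLimOn D f s) (f q) + dist (rightLimOn D f t) (f q) := dist_triangle_right _ _ _
    _ ≤ ε / 3 + ε / 3 := add_le_add (hclose s hs) (hclose t ⟨le_rfl, htu⟩)
    _ < ε := by linarith

theorem exists_tendsto_rightLimOn_left (hD : Dense D) (hf : ∀ n : ℕ, BillingsleyW D n f)
    {t : ℝ≥0} (ht : 0 < t) : ∃ l, Tendsto (rightLimOn D f) (𝓝[<] t) (𝓝 l) := by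
  have := nhdsLT_neBot_of_exists_lt ⟨0, ht⟩
  refine exists_tendsto_of_forall_dist_le fun ε hε => ?_
  obtain ⟨u, hut, hosc⟩ := exists_Ioo_dist_le_left hf ht (half_pos hε)
  refine ⟨Ioo u t, Ioo_mem_nhdsLT hut, fun s hs s' hs' => ?_⟩
  obtain ⟨q, hqD, hq⟩ := hD.exists_between (max_lt hs.2 hs'.2)
  have hqI : q ∈ D ∩ Ioo u t := ⟨hqD, hs.1.trans_le ((le_max_left s s').trans hq.1.le), hq.2⟩
  have hclose : ∀ s ∈ Ioo u t, dist (rightLimOn D f s) (f q) ≤ ε / 2 := fun s hs =>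
    dist_rightLimOn_le hD hf hs.1.le hs.2 fun a ha => hosc a ha q hqI
  calc dist (rightLimOn D f s) (rightLimOn D f s')
      ≤ dist (rightLimOn D f s) (f q) + dist (rightLimOn D f s') (f q) :=
        dist_triangle_right _ _ _
    _ ≤ ε / 2 + ε / 2 := add_le_add (hclose s hs) (hclose s' hs')
    _ = ε := add_halves ε

theorem isCadlag_rightLimOn (hD : Dense D) (hf : ∀ n : ℕ, BillingsleyW D n f) :
    IsCadlag (rightLimOn D f) :=
  ⟨continuousWithinAt_rightLimOn hD hf, fun _ ht => exists_tendsto_rightLimOn_left hD hf ht⟩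

end RightLimit

section Cadlag

variable {f : ℝ≥0 → ℝ}

theorem isCadlag_const (c : ℝ) : IsCadlag fun _ => c :=
  ⟨fun _ => continuousWithinAt_const, fun _ _ => ⟨c, tendsto_const_nhds⟩⟩

theorem IsCadlag.exists_eventually_dist_lt (hf : IsCadlag f) (t : ℝ≥0) {ε : ℝ} (hε : 0 < ε) :
    ∃ L : ℝ, ∀ᶠ s in 𝓝 t, (s < t → dist (f s) L < ε) ∧ (t ≤ s → dist (f s) (f t) < ε) := by
  have hright : ∀ᶠ s in 𝓝 t, t ≤ s → dist (f s) (f t) < ε :=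
    eventually_nhdsWithin_iff.1 (Metric.tendsto_nhds.1 (hf.1 t) ε hε)
  rcases (zero_le (a := t)).eq_or_lt with rfl | ht
  · exact ⟨0, hright.mono fun s hs => ⟨fun h => absurd h not_lt_zero, hs⟩⟩
  · obtain ⟨L, hL⟩ := hf.2 t ht
    exact ⟨L, (eventually_nhdsWithin_iff.1 (Metric.tendsto_nhds.1 hL ε hε)).and hright⟩

/-- Cover `[0, T]` by balls on whose left and right parts `f` oscillates by less than `ε`; three
points within a Lebesgue number of the cover have their middle point on the same side of the
centre as one of the others. -/
theorem IsCadlag.billingsleyW (hf : IsCadlag f) (D : Set ℝ≥0) (T : ℝ≥0) :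
    BillingsleyW D T f := by
  intro m
  set ε : ℝ := (m + 1 : ℝ)⁻¹
  have hball : ∀ t, ∃ L : ℝ, ∃ r > 0, ∀ s ∈ ball t r,
      (s < t → dist (f s) L < ε / 2) ∧ (t ≤ s → dist (f s) (f t) < ε / 2) := fun t =>
    let ⟨L, hL⟩ := hf.exists_eventually_dist_lt t (by positivity)
    ⟨L, Metric.eventually_nhds_iff_ball.1 hL⟩
  choose L r hr hball using hball
  obtain ⟨δ, hδ, hleb⟩ := lebesgue_number_lemma_of_metric (isCompact_Icc (a := 0) (b := T))
    (fun t => isOpen_ball (x := t) (ε := r t))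
    fun s _ => mem_iUnion.2 ⟨s, mem_ball_self (hr s)⟩
  obtain ⟨j, hj⟩ := exists_nat_one_div_lt hδ
  refine ⟨j, fun a _ b _ c _ hab hbc hcT hca => ?_⟩
  obtain ⟨t, ht⟩ := hleb a ⟨zero_le (a := a), hab.trans (hbc.trans hcT)⟩
  have hmem : ∀ s, a ≤ s → s ≤ c → s ∈ ball t (r t) := by
    intro s has hsc
    refine ht ?_
    have hca' : (c : ℝ) ≤ a + (j + 1 : ℝ)⁻¹ := by exact_mod_cast hca
    have hsc' : (s : ℝ) ≤ c := hsc
    rw [mem_ball, NNReal.dist_eq, abs_of_nonneg (sub_nonneg.2 (NNReal.coe_le_coe.2 has))]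
    rw [one_div] at hj
    linarith
  have hb := hball t b (hmem b hab hbc)
  rcases lt_or_ge b t with hbt | htb
  · have ha := (hball t a (hmem a le_rfl (hab.trans hbc))).1 (hab.trans_lt hbt)
    calc min (dist (f a) (f b)) (dist (f b) (f c)) ≤ dist (f a) (f b) := min_le_left _ _
      _ ≤ dist (f a) (L t) + dist (f b) (L t) := dist_triangle_right _ _ _
      _ ≤ ε := by linarith [hb.1 hbt]
  · have hc := (hball t c (hmem c (hab.trans hbc) le_rfl)).2 (htb.trans hbc)
    calc min (dist (f a) (f b)) (dist (f b) (f c)) ≤ dist (f b) (f c) := min_le_right _ _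
      _ ≤ dist (f b) (f t) + dist (f c) (f t) := dist_triangle_right _ _ _
      _ ≤ ε := by linarith [hb.2 htb]

end Cadlag

section Regularization

variable {mΩ : MeasurableSpace Ω} {D : Set ℝ≥0} {X Y : ℝ≥0 → Ω → ℝ}

theorem measurableSet_billingsleyW {m : MeasurableSpace Ω} (hD : D.Countable) {T : ℝ≥0}
    (hX : ∀ t ≤ T, Measurable[m] (X t)) : MeasurableSet[m] {ω | BillingsleyW D T (X · ω)} := by
  simp only [BillingsleyW, ThreePointBound, ofPred_forall, ofPred_exists]
  refine .iInter fun k => .iUnion fun j => .biInter hD fun a _ => .biInter hD fun b _ =>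
    .biInter hD fun c _ => .iInter fun hab => .iInter fun hbc => .iInter fun hcT =>
    .iInter fun _ => ?_
  have hc := hX c hcT
  have hb := hX b (hbc.trans hcT)
  have ha := hX a (hab.trans (hbc.trans hcT))
  exact measurableSet_le ((ha.dist hb).min (hb.dist hc)) measurable_const

variable (D X) in
def badSet : Set Ω := ⋃ n : ℕ, {ω | ¬BillingsleyW D n (X · ω)}

theorem billingsleyW_of_notMem_badSet {ω : Ω} (hω : ω ∉ badSet D X) (n : ℕ) :
    BillingsleyW D n (X · ω) :=
  not_not.1 fun h => hω (mem_iUnion.2 ⟨n, h⟩)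

theorem nnegligible_badSet {𝓕 : Filtration ℝ≥0 mΩ} {P : Measure Ω} (hD : D.Countable)
    (hX : Adapted 𝓕 X) (hY : ∀ ω, IsCadlag (Y · ω)) (hXY : ∀ᵐ ω ∂P, EqOn (X · ω) (Y · ω) D) :
    NNegligible 𝓕 P (badSet D X) := by
  refine ⟨fun n => {ω | ¬BillingsleyW D n (X · ω)},
    fun _ => (measurableSet_billingsleyW hD fun t ht => (hX t).mono (𝓕.mono ht) le_rfl).compl,
    fun n => measure_mono_null ?_ (ae_iff.1 hXY), subset_rfl⟩
  exact fun ω hω hEq => hω (((hY ω).billingsleyW D n).congr hEq.symm)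

variable (D X) in
noncomputable def cadlagVersion (t : ℝ≥0) : Ω → ℝ :=
  (badSet D X)ᶜ.indicator fun ω => rightLimOn D (X · ω) t

theorem cadlagVersion_of_mem {ω : Ω} (hω : ω ∈ badSet D X) (t : ℝ≥0) :
    cadlagVersion D X t ω = 0 :=
  indicator_of_notMem (not_not.2 hω) _

theorem cadlagVersion_of_notMem {ω : Ω} (hω : ω ∉ badSet D X) (t : ℝ≥0) :
    cadlagVersion D X t ω = rightLimOn D (X · ω) t :=
  indicator_of_mem hω _

theorem isCadlag_cadlagVersion (hD : Dense D) (ω : Ω) : IsCadlag (cadlagVersion D X · ω) := by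
  by_cases hω : ω ∈ badSet D X
  · simpa only [cadlagVersion_of_mem hω] using isCadlag_const 0
  · simpa only [cadlagVersion_of_notMem hω]
      using isCadlag_rightLimOn hD (billingsleyW_of_notMem_badSet hω)

theorem cadlagVersion_eq_of_eqOn (hD : Dense D) {ω : Ω} (hY : IsCadlag (Y · ω))
    (hXY : EqOn (X · ω) (Y · ω) D) (t : ℝ≥0) : cadlagVersion D X t ω = Y t ω := by
  have hω : ω ∉ badSet D X := fun h =>
    let ⟨n, hn⟩ := mem_iUnion.1 h
    hn ((hY.billingsleyW D n).congr hXY.symm)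
  rw [cadlagVersion_of_notMem hω, rightLimOn_congr hXY,
    rightLimOn_eq_of_continuousWithinAt hD (hY.1 t)]

theorem measurable_of_forall_gt_of_eq_iInf {β : Type*} [MeasurableSpace β]
    {𝓕 : Filtration ℝ≥0 mΩ} {t : ℝ≥0} (ht : (𝓕 t : MeasurableSpace Ω) = ⨅ u ∈ Ioi t, 𝓕 u)
    {g : Ω → β} (hg : ∀ u > t, Measurable[𝓕 u] g) : Measurable[𝓕 t] g := by
  rw [measurable_iff_comap_le, ht]
  exact le_iInf₂ fun u hu => (hg u hu).comap_le

theorem adapted_cadlagVersion {𝓕 : Filtration ℝ≥0 mΩ} (hD : Dense D) (hX : Adapted 𝓕 X)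
    (hbad : MeasurableSet[𝓕 0] (badSet D X))
    (hright : ∀ t : ℝ≥0, (𝓕 t : MeasurableSpace Ω) = ⨅ u ∈ Ioi t, 𝓕 u) :
    Adapted 𝓕 (cadlagVersion D X) := by
  intro t
  refine measurable_of_forall_gt_of_eq_iInf (hright t) fun u htu => ?_
  obtain ⟨q, -, hqD, hq⟩ := hD.exists_seq_strictAnti_tendsto_of_lt htu
  have hq' : Tendsto q atTop (𝓝[D ∩ Ioi t] t) :=
    tendsto_nhdsWithin_iff.2 ⟨hq, .of_forall fun k => ⟨(hqD k).2, (hqD k).1.1⟩⟩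
  have hmeas : ∀ k, Measurable[𝓕 u] ((badSet D X)ᶜ.indicator (X (q k))) := fun k =>
    ((hX (q k)).mono (𝓕.mono (hqD k).1.2.le) le_rfl).indicator
      (𝓕.mono (zero_le (a := u)) _ hbad).compl
  refine @measurable_of_tendsto_metrizable Ω ℝ (𝓕 u) _ _ _ _ _ _ hmeas
    (tendsto_pi_nhds.2 fun ω => ?_)
  by_cases hω : ω ∈ badSet D X
  · simp [cadlagVersion_of_mem hω, hω]
  · simpa [cadlagVersion_of_notMem hω, hω, Function.comp_def]
      using (tendsto_rightLimOn hD (billingsleyW_of_notMem_badSet hω) t).comp hq'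

theorem ae_eqOn_of_forall_ae_eq {P : Measure Ω} (hD : D.Countable)
    (h : ∀ t, ∀ᵐ ω ∂P, X t ω = Y t ω) : ∀ᵐ ω ∂P, EqOn (X · ω) (Y · ω) D :=
  (ae_ball_iff hD).2 fun t _ => h t

theorem ae_forall_eq_of_forall_ae_eq {P : Measure Ω}
    (hX : ∀ ω t, ContinuousWithinAt (X · ω) (Ici t) t)
    (hY : ∀ ω t, ContinuousWithinAt (Y · ω) (Ici t) t) (h : ∀ t, ∀ᵐ ω ∂P, X t ω = Y t ω) :
    ∀ᵐ ω ∂P, ∀ t, X t ω = Y t ω := by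
  obtain ⟨D, hDc, hD⟩ := TopologicalSpace.exists_countable_dense ℝ≥0
  filter_upwards [ae_eqOn_of_forall_ae_eq hDc h] with ω hω t
  rw [← rightLimOn_eq_of_continuousWithinAt hD (hX ω t), rightLimOn_congr hω,
    rightLimOn_eq_of_continuousWithinAt hD (hY ω t)]

end Regularization

theorem cadlag_adapted_modification_general {mΩ : MeasurableSpace Ω}
    (𝓕 : Filtration ℝ≥0 mΩ) (P : Measure Ω)
    (h : NUsual 𝓕 P) (X Y : ℝ≥0 → Ω → ℝ) (hX : Adapted 𝓕 X)
    (hYcadlag : ∀ ω, IsCadlag fun t => Y t ω)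
    (hmod : ∀ t : ℝ≥0, ∀ᵐ ω ∂P, X t ω = Y t ω) :
    (∃ Z : ℝ≥0 → Ω → ℝ, (∀ ω, IsCadlag fun t => Z t ω) ∧ Adapted 𝓕 Z ∧
      ∀ t : ℝ≥0, ∀ᵐ ω ∂P, X t ω = Z t ω) ∧
    ∀ Z : ℝ≥0 → Ω → ℝ,
      ((∀ ω, IsCadlag fun t => Z t ω) ∧ Adapted 𝓕 Z ∧
        ∀ t : ℝ≥0, ∀ᵐ ω ∂P, X t ω = Z t ω) →
      ∀ᵐ ω ∂P, ∀ t : ℝ≥0, Z t ω = Y t ω := by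
  obtain ⟨D, hDc, hD⟩ := TopologicalSpace.exists_countable_dense ℝ≥0
  have hXY := ae_eqOn_of_forall_ae_eq hDc hmod
  have hbad : MeasurableSet[𝓕 0] (badSet D X) := h.1 _ (nnegligible_badSet hDc hX hYcadlag hXY)
  refine ⟨⟨cadlagVersion D X, isCadlag_cadlagVersion hD, adapted_cadlagVersion hD hX hbad h.2,
    fun t => ?_⟩, ?_⟩
  · filter_upwards [hmod t, hXY] with ω hXYt hωD
    rw [hXYt, cadlagVersion_eq_of_eqOn hD (hYcadlag ω) hωD]
  · rintro Z ⟨hZ, -, hXZ⟩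
    refine ae_forall_eq_of_forall_ae_eq (fun ω => (hZ ω).1) (fun ω => (hYcadlag ω).1) fun t => ?_
    filter_upwards [hmod t, hXZ t] with ω hXYt hXZt
    rw [← hXZt, hXYt]

/-- On a space satisfying the N-usual conditions, an adapted process admitting a càdlàg
modification `Y` admits a càdlàg *adapted* modification, and any càdlàg adapted
modification is indistinguishable from `Y`. -/
theorem cadlag_adapted_modification {mΩ : MeasurableSpace Ω}
    (𝓕 : Filtration ℝ≥0 mΩ) (P : Measure Ω) [IsProbabilityMeasure P]
    (h : NUsual 𝓕 P) (X Y : ℝ≥0 → Ω → ℝ) (hX : Adapted 𝓕 X)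
    (hYcadlag : ∀ ω, IsCadlag fun t => Y t ω)
    (hmod : ∀ t : ℝ≥0, ∀ᵐ ω ∂P, X t ω = Y t ω) :
    (∃ Z : ℝ≥0 → Ω → ℝ, (∀ ω, IsCadlag fun t => Z t ω) ∧ Adapted 𝓕 Z ∧
      ∀ t : ℝ≥0, ∀ᵐ ω ∂P, X t ω = Z t ω) ∧
    ∀ Z : ℝ≥0 → Ω → ℝ,
      ((∀ ω, IsCadlag fun t => Z t ω) ∧ Adapted 𝓕 Z ∧
        ∀ t : ℝ≥0, ∀ᵐ ω ∂P, X t ω = Z t ω) →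
      ∀ᵐ ω ∂P, ∀ t : ℝ≥0, Z t ω = Y t ω :=
  cadlag_adapted_modification_general 𝓕 P h X Y hX hYcadlag hmod
end

section
/- Let (Ω, F, (F_t)_{t≥0}, P) be a filtered probability space satisfying the N-usual conditions, and let (X_t)_{t≥0} be a real-valued adapted process on this space. Assume there exists a process (Y_t)_{t≥0} with continuous paths which is a modification of (X_t)_{t≥0}. Then there exists a continuous and adapted modification of (X_t)_{t≥0}, and any such modification is indistinguishable from (Y_t)_{t≥0}. -/
/-!
`Y` need not be adapted, so the modification has to be rebuilt from `X` itself. Call `ω` good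
if, for every `N`, the path `t ↦ X t ω` is uniformly continuous on the dyadics of `[0, N]`.
Failing this at horizon `N` is an `𝓕 N`-event, since only countably many dyadics `≤ N` are
involved, and it is contained in the null set where `X` and `Y` differ at some dyadic. So the
bad set is N-negligible, hence lies in `𝓕 0`. On a good `ω` the values of `X` along the dyadic
approximations of `t` from the right converge, and the limits form a continuous path. The
limit at `t` is measurable with respect to every `𝓕 v` with `v > t`, hence with respect to
`𝓕 t` by right-continuity. Uniqueness holds because two processes with continuous paths that
agree almost surely on a countable dense set of times are indistinguishable.
-/

open MeasureTheory Set Filter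
open scoped NNReal ENNReal

variable {Ω : Type*}

open Topology

noncomputable def dyadic (p : ℕ × ℕ) : ℝ≥0 := p.2 / 2 ^ p.1

noncomputable def dyadicAbove (n : ℕ) (t : ℝ≥0) : ℝ≥0 := dyadic (n, ⌊t * 2 ^ n⌋₊ + 1)

lemma le_dyadicAbove (n : ℕ) (t : ℝ≥0) : t ≤ dyadicAbove n t := by
  rw [dyadicAbove, dyadic, le_div_iff₀ (by positivity)]
  exact_mod_cast (Nat.lt_floor_add_one _).le

lemma dyadicAbove_le (n : ℕ) (t : ℝ≥0) : dyadicAbove n t ≤ t + (1 / 2) ^ n := by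
  rw [dyadicAbove, dyadic, div_le_iff₀ (by positivity), add_mul, one_div_pow,
    one_div_mul_cancel (by positivity)]
  push_cast
  gcongr
  exact Nat.floor_le (by positivity)

lemma dist_dyadicAbove_le (n : ℕ) (t : ℝ≥0) : dist (dyadicAbove n t) t ≤ (1 / 2) ^ n := by
  rw [NNReal.dist_eq, abs_sub_le_iff]
  have h1 := NNReal.coe_le_coe.2 (le_dyadicAbove n t)
  have h2 := NNReal.coe_le_coe.2 (dyadicAbove_le n t)
  push_cast at h2
  constructor <;> linarith [pow_nonneg (by norm_num : (0 : ℝ) ≤ 1 / 2) n]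

lemma tendsto_dyadicAbove (t : ℝ≥0) : Tendsto (dyadicAbove · t) atTop (𝓝 t) :=
  tendsto_iff_dist_tendsto_zero.2 <| squeeze_zero (fun _ => dist_nonneg) (dist_dyadicAbove_le · t)
    (tendsto_pow_atTop_nhds_zero_of_lt_one (by norm_num) (by norm_num))

-- `ε = 1 / (k + 1)` and `δ = (1 / 2) ^ m` range over countable families, so that the set of
-- such `ω` is measurable.
def DyadicUniformContinuousOn (X : ℝ≥0 → Ω → ℝ) (N : ℕ) (ω : Ω) : Prop :=
  ∀ k : ℕ, ∃ m : ℕ, ∀ p q : ℕ × ℕ, dyadic p ≤ N → dyadic q ≤ N →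
    dist (dyadic p) (dyadic q) ≤ (1 / 2) ^ m → dist (X (dyadic p) ω) (X (dyadic q) ω) ≤ 1 / (k + 1)

lemma measurableSet_dyadicUniformContinuousOn {m : MeasurableSpace Ω} {X : ℝ≥0 → Ω → ℝ}
    {N : ℕ} (hX : ∀ t ≤ (N : ℝ≥0), Measurable (X t)) :
    MeasurableSet {ω | DyadicUniformContinuousOn X N ω} := by
  simp only [DyadicUniformContinuousOn, ofPred_forall, ofPred_exists]
  exact .iInter fun k => .iUnion fun m => .iInter fun p => .iInter fun q => .iInter fun hp =>
    .iInter fun hq => .iInter fun _ => measurableSet_le ((hX _ hp).dist (hX _ hq)) measurable_const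

lemma DyadicUniformContinuousOn.exists_pos {X : ℝ≥0 → Ω → ℝ} {N : ℕ} {ω : Ω}
    (h : DyadicUniformContinuousOn X N ω) {ε : ℝ} (hε : 0 < ε) :
    ∃ δ > 0, ∀ p q : ℕ × ℕ, dyadic p ≤ N → dyadic q ≤ N →
      dist (dyadic p) (dyadic q) < δ → dist (X (dyadic p) ω) (X (dyadic q) ω) < ε := by
  obtain ⟨k, hk⟩ := exists_nat_one_div_lt hε
  obtain ⟨m, hm⟩ := h k
  exact ⟨(1 / 2) ^ m, by positivity, fun p q hp hq hpq => (hm p q hp hq hpq.le).trans_lt hk⟩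

lemma dyadicUniformContinuousOn_of_continuous {X Y : ℝ≥0 → Ω → ℝ} {ω : Ω}
    (hY : Continuous (Y · ω)) (hXY : ∀ p, X (dyadic p) ω = Y (dyadic p) ω) (N : ℕ) :
    DyadicUniformContinuousOn X N ω := by
  intro k
  obtain ⟨δ, hδ, hYδ⟩ := Metric.uniformContinuousOn_iff_le.1
    (isCompact_Icc.uniformContinuousOn_of_continuous (s := Icc 0 (N : ℝ≥0)) hY.continuousOn)
    (1 / (k + 1)) (by positivity)
  obtain ⟨m, hm⟩ := exists_pow_lt_of_lt_one hδ (by norm_num : (1 / 2 : ℝ) < 1)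
  refine ⟨m, fun p q hp hq hpq => ?_⟩
  rw [hXY, hXY]
  exact hYδ _ ⟨zero_le, hp⟩ _ ⟨zero_le, hq⟩ (hpq.trans hm.le)

lemma nNegligible_not_forall_dyadicUniformContinuousOn {mΩ : MeasurableSpace Ω}
    {𝓕 : Filtration ℝ≥0 mΩ} {P : Measure Ω} {X : ℝ≥0 → Ω → ℝ} (hX : Adapted 𝓕 X)
    (hae : ∀ᵐ ω ∂P, ∀ N, DyadicUniformContinuousOn X N ω) :
    NNegligible 𝓕 P {ω | ¬ ∀ N, DyadicUniformContinuousOn X N ω} :=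
  ⟨fun N => {ω | ¬ DyadicUniformContinuousOn X N ω},
    fun N => (measurableSet_dyadicUniformContinuousOn fun t ht =>
      (hX t).mono (𝓕.mono ht) le_rfl).compl,
    fun N => ae_iff.1 (hae.mono fun ω h => h N),
    fun ω hω => by simpa using hω⟩

-- A `liminf` rather than a limit, so that it is defined and measurable for every `ω`.
noncomputable def rightLimit (X : ℝ≥0 → Ω → ℝ) (t : ℝ≥0) (ω : Ω) : ℝ :=
  liminf (fun n => X (dyadicAbove n t) ω) atTop

lemma rightLimit_eq_of_continuous {X Y : ℝ≥0 → Ω → ℝ} {ω : Ω} (hY : Continuous (Y · ω))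
    (hXY : ∀ p, X (dyadic p) ω = Y (dyadic p) ω) (t : ℝ≥0) : rightLimit X t ω = Y t ω :=
  (((hY.tendsto t).comp (tendsto_dyadicAbove t)).congr fun _ => (hXY _).symm).liminf_eq

lemma measurable_rightLimit {m : MeasurableSpace Ω} {X : ℝ≥0 → Ω → ℝ} {t : ℝ≥0} (n₀ : ℕ)
    (hX : ∀ n ≥ n₀, Measurable (X (dyadicAbove n t))) : Measurable (rightLimit X t) := by
  have hshift : rightLimit X t = fun ω => liminf (fun n => X (dyadicAbove (n + n₀) t) ω) atTop :=
    funext fun ω => (liminf_nat_add _ n₀).symm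
  rw [hshift]
  exact .liminf fun n => hX _ (Nat.le_add_left n₀ n)

lemma MeasureTheory.Filtration.measurable_of_forall_lt {ι β : Type*} [Preorder ι]
    [MeasurableSpace β] {mΩ : MeasurableSpace Ω} {𝓕 : Filtration ι mΩ} {t : ι}
    (hrc : 𝓕 t = ⨅ u ∈ Ioi t, 𝓕 u) {f : Ω → β} (hf : ∀ u, t < u → Measurable[𝓕 u] f) :
    Measurable[𝓕 t] f := by
  intro s hs
  rw [hrc]
  simp only [MeasurableSpace.measurableSet_iInf]
  exact fun u hu => hf u hu hs

lemma measurable_rightLimit_of_adapted {mΩ : MeasurableSpace Ω} {𝓕 : Filtration ℝ≥0 mΩ}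
    {X : ℝ≥0 → Ω → ℝ} (hX : Adapted 𝓕 X) {t : ℝ≥0} (hrc : 𝓕 t = ⨅ u ∈ Ioi t, 𝓕 u) :
    Measurable[𝓕 t] (rightLimit X t) := by
  refine Filtration.measurable_of_forall_lt hrc fun v hv => ?_
  obtain ⟨n₀, hn₀⟩ :=
    exists_pow_lt_of_lt_one (tsub_pos_of_lt hv) (by norm_num : (1 / 2 : ℝ≥0) < 1)
  refine measurable_rightLimit n₀ fun n hn => (hX _).mono (𝓕.mono ?_) le_rfl
  calc dyadicAbove n t ≤ t + (1 / 2) ^ n := dyadicAbove_le n t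
    _ ≤ t + (1 / 2) ^ n₀ := by
      gcongr t + ?_
      exact pow_le_pow_of_le_one (by norm_num) (by norm_num) hn
    _ ≤ v := (lt_tsub_iff_left.1 hn₀).le

lemma exists_forall_dist_lt_of_dyadicUniformContinuousOn {X : ℝ≥0 → Ω → ℝ} {ω : Ω}
    (hX : ∀ N, DyadicUniformContinuousOn X N ω) (t : ℝ≥0) {ε : ℝ} (hε : 0 < ε) :
    ∃ δ > 0, ∃ n₀ : ℕ, ∀ s, dist s t < δ → ∀ n ≥ n₀, ∀ n' ≥ n₀,
      dist (X (dyadicAbove n s) ω) (X (dyadicAbove n' t) ω) < ε := by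
  obtain ⟨N, hN⟩ := exists_nat_gt (t + 1)
  obtain ⟨δ, hδ, hXδ⟩ := (hX N).exists_pos hε
  -- Both approximations then lie within `1` of `t`, hence below `N`, and within `δ` of each other.
  set η := min δ 1 / 3 with hη
  have hη_pos : 0 < η := by positivity
  obtain ⟨n₀, hn₀⟩ := exists_pow_lt_of_lt_one hη_pos (by norm_num : (1 / 2 : ℝ) < 1)
  have hclose : ∀ r n, n₀ ≤ n → dist (dyadicAbove n r) r < η := fun r n hn =>
    (dist_dyadicAbove_le n r).trans_lt
      ((pow_le_pow_of_le_one (by norm_num) (by norm_num) hn).trans_lt hn₀)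
  have hle_N : ∀ r, dist r t < 1 → r ≤ N := fun r hr => by
    rw [NNReal.dist_eq] at hr
    have : (r : ℝ) < t + 1 := by linarith [le_abs_self ((r : ℝ) - t)]
    exact_mod_cast (this.trans (by exact_mod_cast hN)).le
  refine ⟨η, hη_pos, n₀, fun s hs n hn n' hn' => ?_⟩
  have hs' : dist (dyadicAbove n s) t < 2 * η := by
    linarith [dist_triangle (dyadicAbove n s) s t, hclose s n hn]
  have ht' := hclose t n' hn'
  have hη1 : 3 * η ≤ 1 := by linarith [min_le_right δ 1]
  have hηδ : 3 * η ≤ δ := by linarith [min_le_left δ 1]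
  have hst : dist (dyadicAbove n s) (dyadicAbove n' t) < δ := by
    linarith [dist_triangle_right (dyadicAbove n s) (dyadicAbove n' t) t]
  exact hXδ (n, _) (n', _) (hle_N (dyadicAbove n s) (by linarith))
    (hle_N (dyadicAbove n' t) (by linarith)) hst

lemma tendsto_rightLimit {X : ℝ≥0 → Ω → ℝ} {ω : Ω}
    (hX : ∀ N, DyadicUniformContinuousOn X N ω) (t : ℝ≥0) :
    Tendsto (fun n => X (dyadicAbove n t) ω) atTop (𝓝 (rightLimit X t ω)) := by
  have hcauchy : CauchySeq fun n => X (dyadicAbove n t) ω := by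
    refine Metric.cauchySeq_iff.2 fun ε hε => ?_
    obtain ⟨δ, hδ, n₀, h⟩ := exists_forall_dist_lt_of_dyadicUniformContinuousOn hX t hε
    exact ⟨n₀, fun n hn n' hn' => h t (by simpa using hδ) n hn n' hn'⟩
  obtain ⟨l, hl⟩ := cauchySeq_tendsto_of_complete hcauchy
  rwa [rightLimit, hl.liminf_eq]

lemma continuous_rightLimit {X : ℝ≥0 → Ω → ℝ} {ω : Ω}
    (hX : ∀ N, DyadicUniformContinuousOn X N ω) : Continuous (rightLimit X · ω) := by
  refine Metric.continuous_iff.2 fun t ε hε => ?_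
  obtain ⟨δ, hδ, n₀, h⟩ := exists_forall_dist_lt_of_dyadicUniformContinuousOn hX t (half_pos hε)
  refine ⟨δ, hδ, fun s hs => ?_⟩
  have hlim : dist (rightLimit X s ω) (rightLimit X t ω) ≤ ε / 2 :=
    le_of_tendsto ((tendsto_rightLimit hX s).dist (tendsto_rightLimit hX t))
      (eventually_atTop.2 ⟨n₀, fun n hn => (h s hs n hn n hn).le⟩)
  linarith

lemma ae_forall_eq_of_continuous {T E : Type*} [TopologicalSpace T]
    [TopologicalSpace.SeparableSpace T] [TopologicalSpace E] [T2Space E] {mΩ : MeasurableSpace Ω}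
    {P : Measure Ω} {Z Y : T → Ω → E} (hZ : ∀ ω, Continuous (Z · ω)) (hY : ∀ ω, Continuous (Y · ω))
    (hZY : ∀ t, ∀ᵐ ω ∂P, Z t ω = Y t ω) : ∀ᵐ ω ∂P, ∀ t, Z t ω = Y t ω := by
  obtain ⟨D, hD_count, hD_dense⟩ := TopologicalSpace.exists_countable_dense T
  have : Countable D := hD_count.to_subtype
  filter_upwards [ae_all_iff.2 fun d : D => hZY d] with ω hω
  exact congr_fun ((hZ ω).ext_on hD_dense (hY ω) fun d hd => hω ⟨d, hd⟩)

theorem continuous_adapted_modification_general {mΩ : MeasurableSpace Ω}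
    (𝓕 : Filtration ℝ≥0 mΩ) (P : Measure Ω)
    (h : NUsual 𝓕 P) (X Y : ℝ≥0 → Ω → ℝ) (hX : Adapted 𝓕 X)
    (hYcont : ∀ ω, Continuous fun t : ℝ≥0 => Y t ω)
    (hmod : ∀ t : ℝ≥0, ∀ᵐ ω ∂P, X t ω = Y t ω) :
    (∃ Z : ℝ≥0 → Ω → ℝ, (∀ ω, Continuous fun t : ℝ≥0 => Z t ω) ∧ Adapted 𝓕 Z ∧
      ∀ t : ℝ≥0, ∀ᵐ ω ∂P, X t ω = Z t ω) ∧
    ∀ Z : ℝ≥0 → Ω → ℝ,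
      ((∀ ω, Continuous fun t : ℝ≥0 => Z t ω) ∧ Adapted 𝓕 Z ∧
        ∀ t : ℝ≥0, ∀ᵐ ω ∂P, X t ω = Z t ω) →
      ∀ᵐ ω ∂P, ∀ t : ℝ≥0, Z t ω = Y t ω := by
  have hdyadic : ∀ᵐ ω ∂P, ∀ p, X (dyadic p) ω = Y (dyadic p) ω := ae_all_iff.2 fun _ => hmod _
  set G := {ω | ∀ N, DyadicUniformContinuousOn X N ω}
  have hG : ∀ t, MeasurableSet[𝓕 t] G := fun t =>
    𝓕.mono zero_le _ (h.1 _ (nNegligible_not_forall_dyadicUniformContinuousOn hX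
      (hdyadic.mono fun ω hω => dyadicUniformContinuousOn_of_continuous (hYcont ω) hω))).of_compl
  refine ⟨⟨fun t => G.indicator (rightLimit X t), fun ω => ?_,
    fun t => (measurable_rightLimit_of_adapted hX (h.2 t)).indicator (hG t), fun t => ?_⟩,
    fun Z ⟨hZ, _, hXZ⟩ => ae_forall_eq_of_continuous hZ hYcont fun t => ?_⟩
  · by_cases hω : ω ∈ G
    · simpa only [indicator_of_mem hω] using continuous_rightLimit hω
    · simpa only [indicator_of_notMem hω] using continuous_const
  · filter_upwards [hdyadic, hmod t] with ω hω hXY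
    have hωG : ω ∈ G := fun N => dyadicUniformContinuousOn_of_continuous (hYcont ω) hω N
    rw [indicator_of_mem hωG, rightLimit_eq_of_continuous (hYcont ω) hω, hXY]
  · filter_upwards [hXZ t, hmod t] with ω h₁ h₂
    rw [← h₁, h₂]

/-- On a space satisfying the N-usual conditions, an adapted process admitting a
modification `Y` with continuous paths admits a continuous *adapted* modification, and
any continuous adapted modification is indistinguishable from `Y`. -/
theorem continuous_adapted_modification {mΩ : MeasurableSpace Ω}
    (𝓕 : Filtration ℝ≥0 mΩ) (P : Measure Ω) [IsProbabilityMeasure P]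
    (h : NUsual 𝓕 P) (X Y : ℝ≥0 → Ω → ℝ) (hX : Adapted 𝓕 X)
    (hYcont : ∀ ω, Continuous fun t : ℝ≥0 => Y t ω)
    (hmod : ∀ t : ℝ≥0, ∀ᵐ ω ∂P, X t ω = Y t ω) :
    (∃ Z : ℝ≥0 → Ω → ℝ, (∀ ω, Continuous fun t : ℝ≥0 => Z t ω) ∧ Adapted 𝓕 Z ∧
      ∀ t : ℝ≥0, ∀ᵐ ω ∂P, X t ω = Z t ω) ∧
    ∀ Z : ℝ≥0 → Ω → ℝ,
      ((∀ ω, Continuous fun t : ℝ≥0 => Z t ω) ∧ Adapted 𝓕 Z ∧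
        ∀ t : ℝ≥0, ∀ᵐ ω ∂P, X t ω = Z t ω) →
      ∀ᵐ ω ∂P, ∀ t : ℝ≥0, Z t ω = Y t ω :=
  continuous_adapted_modification_general 𝓕 P h X Y hX hYcont hmod
end

section
/- Let (X_t)_{t≥0} be a real-valued progressively measurable process defined on a filtered probability space (Ω, F, (F_t)_{t≥0}, P) satisfying the N-usual conditions. Then for every Borel set A ⊆ ℝ, the hitting time T_A := inf{t ≥ 0 : X_t ∈ A} (with inf ∅ = ∞) is an (F_t)_{t≥0}-stopping time. -/
/-
`{T_A < t}` is the projection onto `Ω` of `{(s, ω) ∈ [0, t] × Ω | s < t, X_s ω ∈ A}`, a set in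
`B([0, t]) ⊗ 𝓕_t` by progressive measurability. Such projections are `P`-measurable: the set is
built from countably many sets of `𝓕_t`, hence is the preimage of a Borel subset of
`[0, t] × {0, 1}^ℕ`, whose projection is analytic, and analytic sets are universally measurable
because a greedy choice of bounds on the coordinates of `ℕ^ℕ` approximates them from inside by
compact sets. N-completeness makes the `P`-measurable sets of `𝓕_t` belong to `𝓕_t`, and
right-continuity turns `{T_A < t} ∈ 𝓕_t` for all `t` into `{T_A ≤ t} ∈ 𝓕_t`.
-/

open MeasureTheory Set Filter
open scoped NNReal ENNReal

variable {Ω : Type*}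

open Topology

section Analytic

variable {α : Type*}

lemma iInter_closure_image_subset_image [TopologicalSpace α] [T2Space α]
    {f : (ℕ → ℕ) → α} (hf : Continuous f) (m : ℕ → ℕ) :
    ⋂ n, closure (f '' {σ | ∀ k < n, σ k ≤ m k}) ⊆ f '' {σ | ∀ k, σ k ≤ m k} := by
  intro x hx
  set S : ℕ → Set (ℕ → ℕ) := fun n => {σ | ∀ k < n, σ k ≤ m k}
  have hS : Antitone S := fun n n' hn σ hσ k hk => hσ k (hk.trans_le hn)
  have hne : ∀ n, (comap f (𝓝 x) ⊓ 𝓟 (S n)).NeBot := fun n => by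
    refine inf_principal_neBot_iff.2 fun U ⟨V, hV, hVU⟩ => ?_
    obtain ⟨_, hfV, σ, hσ, rfl⟩ := mem_closure_iff_nhds.1 (mem_iInter.1 hx n) V hV
    exact ⟨σ, hVU hfV, hσ⟩
  have : (⨅ n, comap f (𝓝 x) ⊓ 𝓟 (S n)).NeBot :=
    iInf_neBot_of_directed (directed_of_isDirected_le fun n n' hn =>
      inf_le_inf_left _ (principal_mono.2 (hS hn))) hne
  let U := Ultrafilter.of (⨅ n, comap f (𝓝 x) ⊓ 𝓟 (S n))
  have hU : ∀ n, ↑U ≤ comap f (𝓝 x) ⊓ 𝓟 (S n) := fun n =>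
    (Ultrafilter.of_le _).trans (iInf_le _ n)
  -- `U` is confined coordinatewise to the finite sets `Iic (m k)`, so it converges in `ℕ → ℕ`
  have hcoord : ∀ k, ∃ a ∈ Iic (m k), ↑(U.map (fun σ => σ k)) ≤ 𝓝 a := fun k =>
    (finite_Iic (m k)).isCompact.ultrafilter_le_nhds _ <| le_principal_iff.2 <| mem_map.2 <|
      mem_of_superset (le_principal_iff.1 ((hU (k + 1)).trans inf_le_right))
        fun σ hσ => hσ k k.lt_succ_self
  choose τ hτm hτ using hcoord
  have hUτ : ↑U ≤ 𝓝 τ := tendsto_pi_nhds.2 hτ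
  exact ⟨τ, hτm, tendsto_nhds_unique ((hf.tendsto τ).mono_left hUτ)
    (tendsto_iff_comap.2 ((hU 0).trans inf_le_left))⟩

lemma Monotone.exists_measure_iUnion_le_add [MeasurableSpace α] {μ : Measure α}
    {s : ℕ → Set α} (hs : Monotone s) (hfin : μ (⋃ n, s n) ≠ ∞) {δ : ℝ≥0∞} (hδ : δ ≠ 0) :
    ∃ j, μ (⋃ n, s n) ≤ μ (s j) + δ :=
  (((tendsto_measure_iUnion_atTop hs).add_const δ).eventually_const_lt
    (ENNReal.lt_add_right hfin hδ)).exists.imp fun _ h => h.le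

lemma exists_measure_range_le_image_add [MeasurableSpace α] (μ : Measure α) [IsFiniteMeasure μ]
    (f : (ℕ → ℕ) → α) {ε : ℝ≥0∞} (hε : ε ≠ 0) :
    ∃ m : ℕ → ℕ, ∀ n, μ (range f) ≤ μ (f '' {σ | ∀ k < n, σ k ≤ m k}) + ε := by
  obtain ⟨δ, hδpos, hδsum⟩ := ENNReal.exists_pos_sum_of_countable hε ℕ
  have hcap : ∀ (B : Set (ℕ → ℕ)) n, ∃ j, μ (f '' B) ≤ μ (f '' (B ∩ {σ | σ n ≤ j})) + δ n := by
    intro B n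
    have hmono : Monotone fun j => f '' (B ∩ {σ | σ n ≤ j}) := fun j j' h =>
      image_mono (inter_subset_inter_right _ fun σ hσ => le_trans hσ h)
    have hunion : ⋃ j, f '' (B ∩ {σ | σ n ≤ j}) = f '' B := by
      rw [← image_iUnion, ← inter_iUnion,
        iUnion_eq_univ_iff.2 fun σ => ⟨σ n, le_refl (σ n)⟩, inter_univ]
    simpa only [hunion] using hmono.exists_measure_iUnion_le_add (measure_ne_top μ _)
      (ENNReal.coe_ne_zero.2 (hδpos n).ne')
  choose c hc using hcap
  -- the greedy choice: `B (n + 1)` caps the `n`-th coordinate, losing at most `δ n` of mass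
  let B : ℕ → Set (ℕ → ℕ) := fun n => Nat.rec univ (fun n Bn => Bn ∩ {σ | σ n ≤ c Bn n}) n
  set m : ℕ → ℕ := fun n => c (B n) n
  have hB : ∀ n, B n = {σ | ∀ k < n, σ k ≤ m k} := by
    intro n
    induction n with
    | zero => simp [B]
    | succ n ih =>
      change B n ∩ {σ | σ n ≤ m n} = _
      ext σ
      simp only [ih, mem_inter_iff, mem_ofPred_eq, Nat.forall_lt_succ_right]
  have hbound : ∀ n, μ (range f) ≤ μ (f '' B n) + ∑ k ∈ Finset.range n, (δ k : ℝ≥0∞) := by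
    intro n
    induction n with
    | zero => simp [B, image_univ]
    | succ n ih =>
      calc μ (range f) ≤ μ (f '' B n) + ∑ k ∈ Finset.range n, (δ k : ℝ≥0∞) := ih
        _ ≤ μ (f '' B (n + 1)) + δ n + ∑ k ∈ Finset.range n, (δ k : ℝ≥0∞) := by
          gcongr; exact hc _ _
        _ = μ (f '' B (n + 1)) + ∑ k ∈ Finset.range (n + 1), (δ k : ℝ≥0∞) := by
          rw [Finset.sum_range_succ]; ring
  refine ⟨m, fun n => (hbound n).trans ?_⟩
  rw [hB]
  gcongr
  exact (ENNReal.sum_le_tsum _).trans hδsum.le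

theorem MeasureTheory.AnalyticSet.exists_isCompact_subset_measure_le_add [TopologicalSpace α]
    [T2Space α] [MeasurableSpace α] [OpensMeasurableSpace α] {s : Set α} (hs : AnalyticSet s)
    (μ : Measure α) [IsFiniteMeasure μ] {ε : ℝ≥0∞} (hε : ε ≠ 0) :
    ∃ K ⊆ s, IsCompact K ∧ μ s ≤ μ K + ε := by
  rcases AnalyticSet_def s ▸ hs with rfl | ⟨f, hf, rfl⟩
  · exact ⟨∅, empty_subset _, isCompact_empty, by simp⟩
  obtain ⟨m, hm⟩ := exists_measure_range_le_image_add μ f hε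
  have hK : IsCompact {σ : ℕ → ℕ | ∀ k, σ k ≤ m k} := by
    convert isCompact_univ_pi fun k => (finite_Iic (m k)).isCompact using 1
    ext; simp [Pi.le_def]
  refine ⟨_, image_subset_range _ _, hK.image hf, ?_⟩
  have hmeas : ∀ n, NullMeasurableSet (closure (f '' {σ | ∀ k < n, σ k ≤ m k})) μ :=
    fun n => isClosed_closure.measurableSet.nullMeasurableSet
  have hanti : Antitone fun n => closure (f '' {σ : ℕ → ℕ | ∀ k < n, σ k ≤ m k}) :=
    fun n n' hn => closure_mono (image_mono fun σ hσ k hk => hσ k (hk.trans_le hn))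
  calc μ (range f) ≤ (⨅ n, μ (closure (f '' {σ | ∀ k < n, σ k ≤ m k}))) + ε := by
        rw [ENNReal.iInf_add]
        exact le_iInf fun n => (hm n).trans (by gcongr; exact subset_closure)
    _ = μ (⋂ n, closure (f '' {σ | ∀ k < n, σ k ≤ m k})) + ε := by
        rw [hanti.measure_iInter hmeas ⟨0, measure_ne_top μ _⟩]
    _ ≤ μ (f '' {σ | ∀ k, σ k ≤ m k}) + ε := by
        gcongr; exact iInter_closure_image_subset_image hf m

theorem MeasureTheory.AnalyticSet.nullMeasurableSet [TopologicalSpace α] [T2Space α]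
    [MeasurableSpace α] [OpensMeasurableSpace α] {s : Set α} (hs : AnalyticSet s)
    (μ : Measure α) [IsFiniteMeasure μ] : NullMeasurableSet s μ := by
  choose K hKs hK hμK using fun n : ℕ =>
    hs.exists_isCompact_subset_measure_le_add μ (ENNReal.inv_ne_zero.2 (ENNReal.natCast_ne_top n))
  have hC : MeasurableSet (⋃ n, K n) := .iUnion fun n => (hK n).isClosed.measurableSet
  have hμC : μ s ≤ μ (⋃ n, K n) := by
    refine ENNReal.le_of_forall_pos_le_add fun η hη _ => ?_
    obtain ⟨n, hn⟩ := ENNReal.exists_inv_nat_lt (ENNReal.coe_ne_zero.2 hη.ne')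
    exact (hμK n).trans (add_le_add (measure_mono (subset_iUnion K n)) hn.le)
  exact hC.nullMeasurableSet.congr
    (ae_eq_of_subset_of_measure_ge (iUnion_subset hKs) hμC hC.nullMeasurableSet
      (measure_ne_top μ s))

end Analytic

namespace MeasurableSpace

variable {α : Type*}

theorem exists_countable_subset_measurableSet_generateFrom {C : Set (Set α)} {s : Set α}
    (hs : MeasurableSet[generateFrom C] s) :
    ∃ D ⊆ C, D.Countable ∧ MeasurableSet[generateFrom D] s := by
  induction s, hs using generateFrom_induction with
  | hC t ht _ => exact ⟨{t}, singleton_subset_iff.2 ht, countable_singleton t,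
      measurableSet_generateFrom rfl⟩
  | empty => exact ⟨∅, empty_subset C, countable_empty, @MeasurableSet.empty _ (generateFrom ∅)⟩
  | compl t _ ih =>
    obtain ⟨D, hDC, hD, ht⟩ := ih
    exact ⟨D, hDC, hD, ht.compl⟩
  | iUnion s _ ih =>
    choose D hDC hD hs using ih
    exact ⟨⋃ n, D n, iUnion_subset hDC, countable_iUnion hD,
      .iUnion fun n => generateFrom_mono (subset_iUnion D n) _ (hs n)⟩

theorem exists_countablyGenerated_le_measurableSet_prod {β : Type*} [mα : MeasurableSpace α]
    [mβ : MeasurableSpace β] {E : Set (α × β)} (hE : MeasurableSet E) :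
    ∃ m ≤ mβ, @CountablyGenerated β m ∧ MeasurableSet[mα.prod m] E := by
  rw [← generateFrom_prod] at hE
  obtain ⟨D, hDC, hD, hED⟩ := exists_countable_subset_measurableSet_generateFrom hE
  have hrect : ∀ r ∈ D, ∃ s, MeasurableSet s ∧ ∃ t, MeasurableSet t ∧ s ×ˢ t = r := hDC
  choose! s hs t ht hst using hrect
  refine ⟨generateFrom (t '' D), generateFrom_le (forall_mem_image.2 ht),
    @CountablyGenerated.mk β (generateFrom (t '' D)) ⟨t '' D, hD.image t, rfl⟩,
    generateFrom_le (fun r hr => ?_) E hED⟩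
  rw [← hst r hr]
  exact (hs r hr).prod (measurableSet_generateFrom (mem_image_of_mem t hr))

theorem le_comap_mapNatBool [m : MeasurableSpace α] [CountablyGenerated α] :
    m ≤ MeasurableSpace.pi.comap (mapNatBool α) := by
  conv_lhs => rw [← generateFrom_natGeneratingSequence α]
  refine generateFrom_le (forall_mem_range.2 fun n =>
    ⟨(· n) ⁻¹' {true}, measurable_pi_apply n (measurableSet_singleton true), ?_⟩)
  ext x
  simp [mapNatBool]

theorem comap_prodMap_id {β γ : Type*} (mα : MeasurableSpace α) (mγ : MeasurableSpace γ)
    (j : β → γ) : (mα.prod mγ).comap (Prod.map id j) = mα.prod (mγ.comap j) := by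
  rw [show Prod.map id j = fun p : α × β => (p.1, j p.2) from rfl, comap_prodMk]
  change _ ⊔ MeasurableSpace.comap (j ∘ Prod.snd) mγ = _
  rw [← comap_comp]
  rfl

end MeasurableSpace

theorem MeasurableSet.exists_measurableSet_preimage_prodMap_eq {β : Type*}
    [mα : MeasurableSpace α] [MeasurableSpace β] {E : Set (α × β)} (hE : MeasurableSet E) :
    ∃ j : β → ℕ → Bool, Measurable j ∧
      ∃ E' : Set (α × (ℕ → Bool)), MeasurableSet E' ∧ Prod.map id j ⁻¹' E' = E := by
  obtain ⟨m, hm, hcg, hEm⟩ := MeasurableSpace.exists_countablyGenerated_le_measurableSet_prod hE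
  refine ⟨@MeasurableSpace.mapNatBool β m hcg,
    (@MeasurableSpace.measurable_mapNatBool β m hcg).mono hm le_rfl, ?_⟩
  change MeasurableSet[(mα.prod MeasurableSpace.pi).comap (Prod.map id _)] E
  rw [MeasurableSpace.comap_prodMap_id]
  exact sup_le_sup_left
    (MeasurableSpace.comap_mono (@MeasurableSpace.le_comap_mapNatBool β m hcg)) _ E hEm

theorem MeasurableSet.nullMeasurableSet_image_snd {K : Type*} [TopologicalSpace K] [PolishSpace K]
    [MeasurableSpace K] [BorelSpace K] [mΩ : MeasurableSpace Ω] {E : Set (K × Ω)}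
    (hE : MeasurableSet E) (μ : Measure Ω) [IsFiniteMeasure μ] :
    NullMeasurableSet (Prod.snd '' E) μ := by
  obtain ⟨j, hj, E', hE', rfl⟩ := hE.exists_measurableSet_preimage_prodMap_eq
  have : PolishSpace (ℕ → Bool) := {}
  have : PolishSpace (K × (ℕ → Bool)) := {}
  have hY : AnalyticSet (Prod.snd '' E') := hE'.analyticSet.image_of_continuous continuous_snd
  have hproj : Prod.snd '' (Prod.map id j ⁻¹' E') = j ⁻¹' (Prod.snd '' E') := by
    ext ω; simp
  rw [hproj]
  exact (hY.nullMeasurableSet (μ.map j)).preimage (hj.quasiMeasurePreserving μ)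

theorem MeasureTheory.Filtration.isRightContinuous_of_eq_iInf {ι : Type*} [PartialOrder ι]
    [TopologicalSpace ι] [OrderTopology ι] {mΩ : MeasurableSpace Ω} {𝓕 : Filtration ι mΩ}
    (h : ∀ t, (𝓕 t : MeasurableSpace Ω) = ⨅ u ∈ Ioi t, 𝓕 u) : 𝓕.IsRightContinuous := by
  refine ⟨fun t => ?_⟩
  rw [Filtration.rightCont_apply]
  split_ifs
  · exact (h t).ge
  · exact le_rfl

section Hitting

variable {mΩ : MeasurableSpace Ω} {𝓕 : Filtration ℝ≥0 mΩ} {P : Measure Ω}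

lemma nnegligible_of_subset_of_measure_eq_zero {u : ℝ≥0} {N D : Set Ω}
    (hD : MeasurableSet[𝓕 u] D) (hPD : P D = 0) (hND : N ⊆ D) : NNegligible 𝓕 P N := by
  classical
  obtain ⟨n, hn⟩ := exists_nat_ge u
  refine ⟨fun k => if u ≤ k then D else ∅, fun k => ?_, fun k => ?_,
    fun ω hω => mem_iUnion.2 ⟨n, by simpa [hn] using hND hω⟩⟩
  · dsimp only
    split_ifs with h
    exacts [𝓕.mono h _ hD, MeasurableSpace.measurableSet_empty _]
  · dsimp only
    split_ifs
    exacts [hPD, measure_empty]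

lemma measurableSet_of_nullMeasurableSet_trim
    (hcomplete : ∀ A, NNegligible 𝓕 P A → MeasurableSet[𝓕 0] A) {u : ℝ≥0} {s : Set Ω}
    (hs : @NullMeasurableSet Ω (𝓕 u) s (P.trim (𝓕.le u))) : MeasurableSet[𝓕 u] s := by
  obtain ⟨t, hts, ht, hst⟩ := hs.exists_measurable_subset_ae_eq
  obtain ⟨D, hsD, hD, hD0⟩ := @exists_measurable_superset_of_null _ (𝓕 u) _ _ (ae_eq_set.1 hst).2
  have hPD : P D = 0 := (trim_measurableSet_eq (𝓕.le u) hD).symm.trans hD0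
  rw [← union_sdiff_cancel hts]
  exact ht.union (𝓕.mono zero_le _
    (hcomplete _ (nnegligible_of_subset_of_measure_eq_zero hD hPD hsD)))

lemma setOf_iInf_lt_eq_image_snd {β : Type*} (X : ℝ≥0 → Ω → β) (A : Set β) (t : ℝ≥0) :
    {ω | ⨅ (s : ℝ≥0) (_ : X s ω ∈ A), (s : ℝ≥0∞) < t} =
      Prod.snd '' {p : Iic t × Ω | (p.1 : ℝ≥0) < t ∧ X p.1 p.2 ∈ A} := by
  ext ω
  simp only [mem_ofPred_eq, iInf_lt_iff, ENNReal.coe_lt_coe]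
  constructor
  · rintro ⟨s, hsA, hst⟩
    exact ⟨(⟨s, hst.le⟩, ω), ⟨hst, hsA⟩, rfl⟩
  · rintro ⟨⟨⟨s, _⟩, _⟩, ⟨hst, hsA⟩, rfl⟩
    exact ⟨s, hsA, hst⟩

lemma measurableSet_setOf_iInf_lt [IsFiniteMeasure P]
    (hcomplete : ∀ A, NNegligible 𝓕 P A → MeasurableSet[𝓕 0] A) {β : Type*}
    [TopologicalSpace β] [TopologicalSpace.PseudoMetrizableSpace β] [MeasurableSpace β]
    [BorelSpace β] {X : ℝ≥0 → Ω → β} (hX : IsStronglyProgressive 𝓕 X) {A : Set β}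
    (hA : MeasurableSet A) (t : ℝ≥0) :
    MeasurableSet[𝓕 t] {ω | ⨅ (s : ℝ≥0) (_ : X s ω ∈ A), (s : ℝ≥0∞) < t} := by
  have : PolishSpace (Iic t) := isClosed_Iic.polishSpace
  have hE : MeasurableSet[Subtype.instMeasurableSpace.prod (𝓕 t)]
      {p : Iic t × Ω | (p.1 : ℝ≥0) < t ∧ X p.1 p.2 ∈ A} :=
    (measurableSet_lt (measurable_subtype_coe.comp measurable_fst) measurable_const).inter
      ((hX t).measurable hA)
  rw [setOf_iInf_lt_eq_image_snd]
  exact measurableSet_of_nullMeasurableSet_trim hcomplete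
    (hE.nullMeasurableSet_image_snd (mΩ := 𝓕 t) (P.trim (𝓕.le t)))

end Hitting

/-- Hitting times of Borel sets by progressively measurable processes are stopping times,
under the N-usual conditions: `T_A ω = inf {t ≥ 0 | X t ω ∈ A}` (with `inf ∅ = ∞`)
satisfies `{ω | T_A ω ≤ t} ∈ 𝓕 t` for every `t`. -/
theorem hitting_time_is_stopping_time {mΩ : MeasurableSpace Ω}
    (𝓕 : Filtration ℝ≥0 mΩ) (P : Measure Ω) [IsProbabilityMeasure P]
    (h : NUsual 𝓕 P) (X : ℝ≥0 → Ω → ℝ) (hX : ProgMeasurable 𝓕 X)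
    (A : Set ℝ) (hA : MeasurableSet A) (T : Ω → ℝ≥0∞)
    (hT : ∀ ω, T ω = ⨅ (t : ℝ≥0) (_ : X t ω ∈ A), (t : ℝ≥0∞)) :
    ∀ t : ℝ≥0, MeasurableSet[𝓕 t] {ω | T ω ≤ (t : ℝ≥0∞)} := by
  have : 𝓕.IsRightContinuous := Filtration.isRightContinuous_of_eq_iInf h.2
  obtain rfl : T = fun ω => ⨅ (t : ℝ≥0) (_ : X t ω ∈ A), (t : ℝ≥0∞) := funext hT
  exact isStoppingTime_of_measurableSet_lt_of_isRightContinuous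
    (measurableSet_setOf_iInf_lt (P := P) h.1 hX hA)
end
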